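/- If m is additionally continuous on (0, ∞), then the limits v^∞ = lim_{t→∞} v^t and η^∞ = lim_{t→∞} η^{t+1} of the TSR state-evolution sequences exist and satisfy the fixed-point equations η^∞ = (((N−M)/M)·v^∞ + (N/M)·σ²)⁻¹ and v^∞ = (1/m(η^∞) − η^∞)⁻¹, the latter provided 1/m(η^∞) − η^∞ > 0. -/

import Mathlib

/-!
Both maps of the state evolution are decreasing: `φ` on `[0, ∞)` trivially, and `ψ` on `(0, ∞)`
because `1/m(η) - η` is non-decreasing and, by `m(η) ≤ 1/(1+η)`, at least `1`. Hence
`v ↦ ψ(φ(v))` is increasing, and since `v¹ ≤ 1 = v⁰` the sequence `v^t` decreases; it stays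
positive, so it converges. Continuity of `φ` and `ψ` then carries both recursions to the limit.
-/

open Filter Set Topology

theorem antitone_of_succ_eq_of_monotoneOn {α : Type*} [Preorder α] {f : α → α} {s : Set α}
    {x : ℕ → α} (hf : MonotoneOn f s) (hs : ∀ n, x n ∈ s) (hx : ∀ n, x (n + 1) = f (x n))
    (h₁₀ : x 1 ≤ x 0) : Antitone x := by
  refine antitone_nat_of_succ_le fun n => ?_
  induction n with
  | zero => exact h₁₀
  | succ n ih => exact (hx _).trans_le ((hf (hs _) (hs _) ih).trans_eq (hx n).symm)

/-- The paper's `φ`, with `a = (N - M)/M` and `b = (N/M) σ²`. -/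
noncomputable def tsrPhi (a b v : ℝ) : ℝ := (a * v + b)⁻¹

/-- The paper's `ψ`. -/
noncomputable def tsrPsi (m : ℝ → ℝ) (η : ℝ) : ℝ := (1 / m η - η)⁻¹

section Phi

variable {a b : ℝ}

theorem mul_add_pos_of_nonneg_of_pos (ha : 0 ≤ a) (hb : 0 < b) {v : ℝ} (hv : 0 ≤ v) :
    0 < a * v + b :=
  add_pos_of_nonneg_of_pos (mul_nonneg ha hv) hb

theorem tsrPhi_pos (ha : 0 ≤ a) (hb : 0 < b) {v : ℝ} (hv : 0 ≤ v) : 0 < tsrPhi a b v :=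
  inv_pos.mpr (mul_add_pos_of_nonneg_of_pos ha hb hv)

theorem tsrPhi_antitoneOn (ha : 0 ≤ a) (hb : 0 < b) : AntitoneOn (tsrPhi a b) (Ici 0) :=
  fun u hu _ _ huw => inv_anti₀ (mul_add_pos_of_nonneg_of_pos ha hb hu) (by gcongr)

theorem tsrPhi_continuousAt {v : ℝ} (hv : a * v + b ≠ 0) : ContinuousAt (tsrPhi a b) v :=
  ((continuousAt_const.mul continuousAt_id).add continuousAt_const).inv₀ hv

end Phi

section Psi

variable {m : ℝ → ℝ}

theorem one_le_one_div_sub_of_le_one_div_one_add {μ η : ℝ} (hμ : 0 < μ) (h : μ ≤ 1 / (1 + η)) :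
    1 ≤ 1 / μ - η := by
  have hη : 0 < 1 + η := one_div_pos.mp (hμ.trans_le h)
  have : 1 + η ≤ 1 / μ := (le_one_div hμ hη).mp h
  linarith

theorem tsrPsi_mem_Ioc {η : ℝ} (hm0 : 0 < m η) (hm : m η ≤ 1 / (1 + η)) :
    tsrPsi m η ∈ Ioc 0 1 := by
  have h := one_le_one_div_sub_of_le_one_div_one_add hm0 hm
  exact ⟨inv_pos.mpr (by linarith), inv_le_one_of_one_le₀ h⟩

theorem tsrPsi_antitoneOn (hm : ∀ η > (0 : ℝ), 0 < m η ∧ m η ≤ 1 / (1 + η))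
    (hf : ∀ η₁ η₂ : ℝ, 0 < η₁ → η₁ ≤ η₂ → 1 / m η₁ - η₁ ≤ 1 / m η₂ - η₂) :
    AntitoneOn (tsrPsi m) (Ioi 0) := fun η₁ h₁ η₂ _ h₁₂ =>
  have h := one_le_one_div_sub_of_le_one_div_one_add (hm η₁ h₁).1 (hm η₁ h₁).2
  inv_anti₀ (by linarith) (hf η₁ η₂ h₁ h₁₂)

theorem tsrPsi_continuousAt {η : ℝ} (hcont : ContinuousAt m η) (hm0 : m η ≠ 0)
    (h : 1 / m η - η ≠ 0) : ContinuousAt (tsrPsi m) η :=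
  ((continuousAt_const.div hcont hm0).sub continuousAt_id).inv₀ h

end Psi

/-- If `m` is additionally continuous on `(0, ∞)`, the limits
`v^∞ = lim v^t` and `η^∞ = lim η^{t+1}` of the TSR state-evolution sequences exist
and satisfy the fixed-point equations `η^∞ = (((N−M)/M)·v^∞ + (N/M)·σ²)⁻¹` and,
provided `1/m(η^∞) − η^∞ > 0`, also `v^∞ = (1/m(η^∞) − η^∞)⁻¹`. -/
theorem tsr_se_limit_fixed_point (M N σ2 : ℝ) (hM : 0 < M) (hMN : M < N) (hσ2 : 0 < σ2)
    (m : ℝ → ℝ)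
    (hm : ∀ η > (0 : ℝ), 0 < m η ∧ m η ≤ 1 / (1 + η))
    (hf : ∀ η₁ η₂ : ℝ, 0 < η₁ → η₁ ≤ η₂ → 1 / m η₁ - η₁ ≤ 1 / m η₂ - η₂)
    (hcont : ContinuousOn m (Set.Ioi 0))
    (v η : ℕ → ℝ) (hv0 : v 0 = 1)
    (hη : ∀ t : ℕ, η (t + 1) = (((N - M) / M) * v t + (N / M) * σ2)⁻¹)
    (hv : ∀ t : ℕ, v (t + 1) = (1 / m (η (t + 1)) - η (t + 1))⁻¹) :
    ∃ vinf ηinf : ℝ,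
      Tendsto v atTop (nhds vinf) ∧
      Tendsto (fun t : ℕ => η (t + 1)) atTop (nhds ηinf) ∧
      ηinf = (((N - M) / M) * vinf + (N / M) * σ2)⁻¹ ∧
      (0 < 1 / m ηinf - ηinf → vinf = (1 / m ηinf - ηinf)⁻¹) := by
  have ha : 0 ≤ (N - M) / M := div_nonneg (by linarith) hM.le
  have hb : 0 < N / M * σ2 := mul_pos (div_pos (by linarith) hM) hσ2
  have hstep : ∀ t, v (t + 1) = (tsrPsi m ∘ tsrPhi _ _) (v t) := fun t => by rw [hv, hη]; rfl
  have hψφ : ∀ u, 0 ≤ u → tsrPsi m (tsrPhi _ _ u) ∈ Ioc 0 1 := fun u hu =>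
    have hφ := tsrPhi_pos ha hb hu
    tsrPsi_mem_Ioc (hm _ hφ).1 (hm _ hφ).2
  have hv_nonneg : ∀ t, 0 ≤ v t := by
    intro t
    induction t with
    | zero => exact hv0 ▸ zero_le_one
    | succ t ih => exact hstep t ▸ (hψφ _ ih).1.le
  have hanti : Antitone v :=
    antitone_of_succ_eq_of_monotoneOn
      ((tsrPsi_antitoneOn hm hf).comp (tsrPhi_antitoneOn ha hb) fun _ => tsrPhi_pos ha hb)
      hv_nonneg hstep (by rw [hstep 0, hv0]; exact (hψφ _ zero_le_one).2)
  have hvlim : Tendsto v atTop (𝓝 (⨅ t, v t)) :=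
    tendsto_atTop_ciInf hanti ⟨0, forall_mem_range.2 hv_nonneg⟩
  have hvinf : 0 ≤ ⨅ t, v t := le_ciInf hv_nonneg
  have hηlim : Tendsto (fun t => η (t + 1)) atTop (𝓝 (tsrPhi _ _ (⨅ t, v t))) :=
    ((tsrPhi_continuousAt (mul_add_pos_of_nonneg_of_pos ha hb hvinf).ne').tendsto.comp
      hvlim).congr fun t => (hη t).symm
  refine ⟨_, _, hvlim, hηlim, rfl, fun hpos => ?_⟩
  have hηinf := tsrPhi_pos ha hb hvinf
  have hψlim := ((tsrPsi_continuousAt (hcont.continuousAt (Ioi_mem_nhds hηinf))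
    (hm _ hηinf).1.ne' hpos.ne').tendsto.comp hηlim).congr fun t => (hv t).symm
  exact tendsto_nhds_unique ((tendsto_add_atTop_iff_nat 1).2 hvlim) hψlim
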